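/- arXiv:1312.5701 — 2 statements merged into one kernel-verified Lean document; each statement's English description precedes it below -/
import Mathlib

section
/- Let f : ℕ → ℝ be an arithmetic function, N, H positive integers, and let M_f(x,H) be any real-valued function of the integer x. Define the Selberg integral J_f(N,H) = Σ_{N<x≤2N} |Σ_{x<n≤x+H} f(n) − M_f(x,H)|², the modified Selberg integral J̃_f(N,H) = Σ_{N<x≤2N} |(1/H)·Σ_{h≤H} Σ_{x−h<n<x+h} f(n) − M_f(x,H)|², and J_{w′,f}(N,H) = Σ_{N<x≤2N} |Σ_{n≥1} (C_H(n−x) − u_H(n−x)) f(n)|². Then |J̃_f(N,H) − J_f(N,H)| ≤ √(2 · J_{w′,f}(N,H) · (J̃_f(N,H) + J_f(N,H))). -/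
/-!
By Cesàro's identity, `J̃_f` and `J_f` are `Σ_x a_x²` and `Σ_x b_x²`, where `a_x` and `b_x` are the
sums of `f` against the weights `C_H(· - x)` and `u_H(· - x)`, shifted by `M_f(x,H)`; then
`J_{w′,f} = Σ_x (a_x - b_x)²`. Writing `a² - b² = (a - b)(a + b)`, Cauchy–Schwarz together with
`(a + b)² ≤ 2(a² + b²)` gives the bound.
-/

/-- The restriction to `[-H,H]` of the unit step weight: `u_H(a) = 1` if `0 < a ≤ H`. -/
noncomputable def uH (H : ℕ) (a : ℤ) : ℝ := if 0 < a ∧ a ≤ (H : ℤ) then 1 else 0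

/-- The Cesaro weight `C_H(a) = max(1 - |a|/H, 0)` (vanishing outside `[-H,H]`). -/
noncomputable def cesaroH (H : ℕ) (a : ℤ) : ℝ := max (1 - |(a : ℝ)| / (H : ℝ)) 0

/-- The Selberg integral `J_f(N,H)` with mean value `M_f(x,H)`. -/
noncomputable def Jsel (f : ℕ → ℝ) (Mf : ℕ → ℝ) (N H : ℕ) : ℝ :=
  ∑ x ∈ Finset.Ioc N (2 * N), (∑ n ∈ Finset.Ioc x (x + H), f n - Mf x) ^ 2

/-- The modified Selberg integral `J̃_f(N,H)` with mean value `M_f(x,H)`. -/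
noncomputable def Jtil (f : ℕ → ℝ) (Mf : ℕ → ℝ) (N H : ℕ) : ℝ :=
  ∑ x ∈ Finset.Ioc N (2 * N),
    ((1 / (H : ℝ)) * ∑ h ∈ Finset.Icc 1 H, ∑ n ∈ Finset.Ioo (x - h) (x + h), f n - Mf x) ^ 2

/-- `J_{w′,f}(N,H) = Σ_{N<x≤2N} |Σ_{n≥1} (C_H(n-x) - u_H(n-x)) f(n)|²` (the weight
vanishes outside `[-H,H]`, so the inner sum is over `1 ≤ n ≤ x+H`). -/
noncomputable def Jw' (f : ℕ → ℝ) (N H : ℕ) : ℝ :=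
  ∑ x ∈ Finset.Ioc N (2 * N),
    (∑ n ∈ Finset.Icc 1 (x + H),
      (cesaroH H ((n : ℤ) - (x : ℤ)) - uH H ((n : ℤ) - (x : ℤ))) * f n) ^ 2

open Finset

theorem abs_sum_sq_sub_sum_sq_le {ι : Type*} (s : Finset ι) (a b : ι → ℝ) :
    |∑ i ∈ s, a i ^ 2 - ∑ i ∈ s, b i ^ 2| ≤
      √(2 * (∑ i ∈ s, (a i - b i) ^ 2) * (∑ i ∈ s, a i ^ 2 + ∑ i ∈ s, b i ^ 2)) := by
  have h_diff : ∑ i ∈ s, a i ^ 2 - ∑ i ∈ s, b i ^ 2 = ∑ i ∈ s, (a i - b i) * (a i + b i) := by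
    rw [← sum_sub_distrib]
    exact sum_congr rfl fun i _ => by ring
  have h_sum_sq : ∑ i ∈ s, (a i + b i) ^ 2 ≤ 2 * (∑ i ∈ s, a i ^ 2 + ∑ i ∈ s, b i ^ 2) := by
    rw [← sum_add_distrib, mul_sum]
    exact sum_le_sum fun i _ => by nlinarith [sq_nonneg (a i - b i)]
  rw [h_diff, ← Real.sqrt_sq_eq_abs]
  refine Real.sqrt_le_sqrt ?_
  calc (∑ i ∈ s, (a i - b i) * (a i + b i)) ^ 2
      ≤ (∑ i ∈ s, (a i - b i) ^ 2) * ∑ i ∈ s, (a i + b i) ^ 2 := sum_mul_sq_le_sq_mul_sq s _ _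
    _ ≤ (∑ i ∈ s, (a i - b i) ^ 2) * (2 * (∑ i ∈ s, a i ^ 2 + ∑ i ∈ s, b i ^ 2)) :=
        mul_le_mul_of_nonneg_left h_sum_sq (sum_nonneg fun i _ => sq_nonneg _)
    _ = _ := by ring

theorem cesaroH_eq_natSub_div {H : ℕ} (hH : 0 < H) (z : ℤ) :
    cesaroH H z = ((H - z.natAbs : ℕ) : ℝ) / H := by
  have habs : |(z : ℝ)| = z.natAbs := by rw [Nat.cast_natAbs, Int.cast_abs]
  have hH' : (0 : ℝ) < H := by exact_mod_cast hH
  unfold cesaroH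
  rcases le_or_gt z.natAbs H with h | h
  · have h' : (z.natAbs : ℝ) ≤ H := by exact_mod_cast h
    rw [Nat.cast_sub h, max_eq_left, habs]
    · field_simp
    · rw [habs, sub_nonneg, div_le_one hH']
      exact h'
  · have h' : (H : ℝ) ≤ z.natAbs := by exact_mod_cast h.le
    rw [Nat.sub_eq_zero_of_le h.le, max_eq_right, Nat.cast_zero, zero_div]
    rw [habs, sub_nonpos, le_div_iff₀ hH', one_mul]
    exact h'

/-- Cesàro's identity: `n` lies in `(x - h, x + h)` for exactly `H - |n - x|` of the `h ≤ H`. -/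
theorem cesaro_average_eq_sum_cesaroH (f : ℕ → ℝ) {H : ℕ} (hH : 0 < H) (x : ℕ) :
    1 / (H : ℝ) * ∑ h ∈ Icc 1 H, ∑ n ∈ Ioo (x - h) (x + h), f n
      = ∑ n ∈ Icc 1 (x + H), cesaroH H ((n : ℤ) - x) * f n := by
  have h_extend : ∀ h ∈ Icc 1 H, ∑ n ∈ Ioo (x - h) (x + h), f n
      = ∑ n ∈ Icc 1 (x + H), if n ∈ Ioo (x - h) (x + h) then f n else 0 := by
    intro h hh
    rw [sum_ite_mem, inter_eq_right.mpr]
    intro n hn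
    simp only [mem_Ioo, mem_Icc] at hn hh ⊢
    omega
  rw [sum_congr rfl h_extend, sum_comm, mul_sum]
  refine sum_congr rfl fun n hn => ?_
  have h_count : {h ∈ Icc 1 H | n ∈ Ioo (x - h) (x + h)} = Ioc ((n : ℤ) - x).natAbs H := by
    ext h
    simp only [mem_filter, mem_Icc, mem_Ioo, mem_Ioc] at hn ⊢
    omega
  rw [← sum_filter, sum_const, h_count, Nat.card_Ioc, nsmul_eq_mul, cesaroH_eq_natSub_div hH]
  ring

theorem sum_Ioc_eq_sum_uH (f : ℕ → ℝ) (x H : ℕ) :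
    ∑ n ∈ Ioc x (x + H), f n = ∑ n ∈ Icc 1 (x + H), uH H ((n : ℤ) - x) * f n := by
  have h_weight : ∀ n ∈ Icc 1 (x + H),
      uH H ((n : ℤ) - x) * f n = if n ∈ Ioc x (x + H) then f n else 0 := by
    intro n _
    have h_iff : (0 < (n : ℤ) - x ∧ (n : ℤ) - x ≤ H) ↔ n ∈ Ioc x (x + H) := by
      rw [mem_Ioc]
      omega
    simp only [uH, h_iff, ite_mul, one_mul, zero_mul]
  rw [sum_congr rfl h_weight, sum_ite_mem, inter_eq_right.mpr]
  intro n hn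
  simp only [mem_Ioc, mem_Icc] at hn ⊢
  omega

theorem stmt4_general (f : ℕ → ℝ) (Mf : ℕ → ℝ) (N H : ℕ) (hH : 0 < H) :
    |Jtil f Mf N H - Jsel f Mf N H| ≤
      Real.sqrt (2 * Jw' f N H * (Jtil f Mf N H + Jsel f Mf N H)) := by
  have h_bound := abs_sum_sq_sub_sum_sq_le (Ioc N (2 * N))
    (fun x => ∑ n ∈ Icc 1 (x + H), cesaroH H ((n : ℤ) - x) * f n - Mf x)
    (fun x => ∑ n ∈ Icc 1 (x + H), uH H ((n : ℤ) - x) * f n - Mf x)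
  simp only [sub_sub_sub_cancel_right] at h_bound
  simpa only [Jtil, Jsel, Jw', cesaro_average_eq_sum_cesaroH f hH, sum_Ioc_eq_sum_uH f, sub_mul,
    sum_sub_distrib]

theorem stmt4 (f : ℕ → ℝ) (Mf : ℕ → ℝ) (N H : ℕ) (hN : 0 < N) (hH : 0 < H) :
    |Jtil f Mf N H - Jsel f Mf N H| ≤
      Real.sqrt (2 * Jw' f N H * (Jtil f Mf N H + Jsel f Mf N H)) :=
  stmt4_general f Mf N H hH
end

section
/- Let w : ℤ → ℂ be a good weight, i.e. there is K with |w(n)| ≤ K for all n ∈ ℤ and there is C such that |Σ_{a≡0 (mod ℓ)} 𝒞_{w_H}(a) − (1/ℓ)·Σ_{a∈ℤ} 𝒞_{w_H}(a)| ≤ C·H for every positive integer H and every 1 ≤ ℓ ≤ 2H. Then there exists C′ > 0 (depending only on K and C) such that for every positive integer H and every integer q ≥ 1, (1/q)·Σ_{j=1}^{q−1} |ŵ_H(j/q)|² ≤ C′·H. -/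
/-- `e(t) = e^{2πit}`. -/
noncomputable def eC (t : ℝ) : ℂ := Complex.exp (2 * Real.pi * Complex.I * t)

/-- The restriction `w_H` of a weight `w` to `[-H,H]`. -/
noncomputable def wres (w : ℤ → ℂ) (H : ℕ) (a : ℤ) : ℂ := if |a| ≤ (H : ℤ) then w a else 0

/-- The discrete Fourier transform `ŵ_H(α) = Σ_{|a|≤H} w(a) e(aα)`. -/
noncomputable def dft (w : ℤ → ℂ) (H : ℕ) (α : ℝ) : ℂ :=
  ∑ a ∈ Finset.Icc (-(H : ℤ)) (H : ℤ), w a * eC ((a : ℝ) * α)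

/-- The correlation `𝒞_{w_H}(a) = Σ_m w_H(m)·conj(w_H(m-a))`. -/
noncomputable def corrW (w : ℤ → ℂ) (H : ℕ) (a : ℤ) : ℂ :=
  ∑ m ∈ Finset.Icc (-(H : ℤ)) (H : ℤ), wres w H m * (starRingEnd ℂ) (wres w H (m - a))

/-!
Expanding `|ŵ_H(α)|²` gives `Σ_a 𝒞_{w_H}(a) e(aα)`, so averaging over the `q`-th roots of unity
picks out the correlations at multiples of `q`, while the frequency `j = 0` contributes
`Σ_a 𝒞_{w_H}(a)`. Hence the mean of `|ŵ_H(j/q)|²` over `1 ≤ j < q` is exactly the discrepancy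
`Σ_{q ∣ a} 𝒞_{w_H}(a) - (1/q) Σ_a 𝒞_{w_H}(a)`, which is `O(H)` by hypothesis when `q ≤ 2H`.
When `q > 2H` only `a = 0` is a multiple of `q` in the support `[-2H, 2H]`, and the mean is at most
`𝒞_{w_H}(0) ≤ (2H + 1) K²`.
-/

open Finset ComplexConjugate

lemma eC_add (s t : ℝ) : eC (s + t) = eC s * eC t := by
  simp only [eC, Complex.ofReal_add, mul_add, Complex.exp_add]

lemma conj_eC (t : ℝ) : conj (eC t) = eC (-t) := by
  simp only [eC, ← Complex.exp_conj, map_mul, Complex.conj_I, Complex.conj_ofReal, map_ofNat,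
    Complex.ofReal_neg]
  ring_nf

lemma eC_nat_mul (n : ℕ) (t : ℝ) : eC (n * t) = eC t ^ n := by
  rw [eC, eC, ← Complex.exp_nat_mul]
  push_cast
  ring_nf

lemma eC_eq_one_iff (t : ℝ) : eC t = 1 ↔ ∃ n : ℤ, t = n := by
  have h2πi : 2 * (Real.pi : ℂ) * Complex.I ≠ 0 := by simp [Real.pi_ne_zero]
  rw [eC, Complex.exp_eq_one_iff]
  refine exists_congr fun n => ?_
  rw [mul_comm (n : ℂ), mul_right_inj' h2πi]
  exact_mod_cast Iff.rfl

lemma eC_intCast (n : ℤ) : eC n = 1 := (eC_eq_one_iff _).2 ⟨n, rfl⟩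

lemma eC_zero : eC 0 = 1 := by simpa using eC_intCast 0

lemma eC_div_eq_one_iff {q : ℕ} (hq : q ≠ 0) (a : ℤ) : eC (a / q) = 1 ↔ (q : ℤ) ∣ a := by
  rw [eC_eq_one_iff]
  constructor
  · rintro ⟨n, hn⟩
    refine ⟨n, ?_⟩
    rw [div_eq_iff (by positivity)] at hn
    exact_mod_cast hn.trans (mul_comm _ _)
  · rintro ⟨n, rfl⟩
    exact ⟨n, by push_cast; field_simp⟩

lemma sum_range_eC_mul_div {q : ℕ} (hq : q ≠ 0) (a : ℤ) :
    ∑ j ∈ range q, eC (a * (j / q)) = if (q : ℤ) ∣ a then (q : ℂ) else 0 := by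
  have hpow (j : ℕ) : eC (a * (j / q)) = eC (a / q) ^ j := by
    rw [← eC_nat_mul]
    ring_nf
  simp_rw [hpow]
  split_ifs with hdvd
  · simp [(eC_div_eq_one_iff hq a).2 hdvd]
  · rw [geom_sum_eq ((eC_div_eq_one_iff hq a).not.2 hdvd), ← eC_nat_mul,
      mul_div_cancel₀ _ (by positivity), eC_intCast, sub_self, zero_div]

section Restriction

variable {w : ℤ → ℂ} {H : ℕ}

lemma wres_of_abs_le {a : ℤ} (h : |a| ≤ H) : wres w H a = w a := if_pos h

lemma wres_of_lt_abs {a : ℤ} (h : (H : ℤ) < |a|) : wres w H a = 0 := if_neg h.not_ge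

lemma norm_wres_le {K : ℝ} (hw : ∀ n, ‖w n‖ ≤ K) (a : ℤ) : ‖wres w H a‖ ≤ K := by
  unfold wres
  split_ifs
  · exact hw a
  · simpa using (norm_nonneg _).trans (hw 0)

lemma norm_corrW_le {K : ℝ} (hw : ∀ n, ‖w n‖ ≤ K) (a : ℤ) :
    ‖corrW w H a‖ ≤ (2 * H + 1) * K ^ 2 := by
  have hK : 0 ≤ K := (norm_nonneg _).trans (hw 0)
  have hcard : (#(Icc (-(H : ℤ)) H) : ℝ) = 2 * H + 1 := by
    rw [Int.card_Icc, show (H : ℤ) + 1 - -H = ((2 * H + 1 : ℕ) : ℤ) by push_cast; ring,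
      Int.toNat_natCast]
    push_cast
    ring
  calc ‖corrW w H a‖ ≤ ∑ _m ∈ Icc (-(H : ℤ)) H, K ^ 2 := by
        refine (norm_sum_le _ _).trans (sum_le_sum fun m _ => ?_)
        rw [norm_mul, Complex.norm_conj, sq]
        exact mul_le_mul (norm_wres_le hw m) (norm_wres_le hw _) (norm_nonneg _) hK
    _ = (2 * H + 1) * K ^ 2 := by rw [sum_const, nsmul_eq_mul, hcard]

end Restriction

lemma sum_Icc_two_mul_eq_sum_Icc_sub {M : Type*} [AddCommMonoid M] (H : ℕ) {m : ℤ}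
    (hm : |m| ≤ H) (g : ℤ → M) (hg : ∀ a, (H : ℤ) < |m - a| → g a = 0) :
    ∑ a ∈ Icc (-(2 * H : ℤ)) (2 * H : ℤ), g a = ∑ b ∈ Icc (-(H : ℤ)) H, g (m - b) := by
  rw [abs_le] at hm
  have hsub : Icc (m - H) (m + H) ⊆ Icc (-(2 * H : ℤ)) (2 * H : ℤ) :=
    Icc_subset_Icc (by omega) (by omega)
  rw [← sum_subset hsub fun a _ ha => hg a ?_]
  · refine sum_nbij' (fun a => m - a) (fun b => m - b) ?_ ?_ ?_ ?_ ?_ <;>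
      intros <;> simp_all only [mem_Icc, sub_sub_cancel] <;> omega
  · rw [mem_Icc, not_and_or] at ha
    rw [lt_abs]
    omega

lemma dft_mul_conj_dft (w : ℤ → ℂ) (H : ℕ) (α : ℝ) :
    dft w H α * conj (dft w H α) =
      ∑ a ∈ Icc (-(2 * H : ℤ)) (2 * H : ℤ), corrW w H a * eC (a * α) := by
  simp_rw [corrW, sum_mul]
  rw [sum_comm]
  simp only [dft, map_sum, sum_mul_sum]
  refine sum_congr rfl fun m hm => ?_
  have hm : |m| ≤ H := abs_le.2 (mem_Icc.1 hm)
  rw [sum_Icc_two_mul_eq_sum_Icc_sub H hm _ fun a ha => by simp [wres_of_lt_abs ha]]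
  refine sum_congr rfl fun b hb => ?_
  rw [sub_sub_cancel, wres_of_abs_le hm, wres_of_abs_le (abs_le.2 (mem_Icc.1 hb)), map_mul,
    conj_eC, Int.cast_sub, sub_mul, sub_eq_add_neg, ← neg_mul, eC_add]
  ring

lemma mean_sq_dft_eq_sum_corrW_dvd (w : ℤ → ℂ) (H : ℕ) {q : ℕ} (hq : q ≠ 0) :
    (((1 / q : ℝ) * ∑ j ∈ range q, ‖dft w H (j / q)‖ ^ 2 : ℝ) : ℂ) =
      ∑ a ∈ (Icc (-(2 * H : ℤ)) (2 * H : ℤ)).filter (fun a => (q : ℤ) ∣ a), corrW w H a := by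
  push_cast
  simp_rw [← Complex.mul_conj', dft_mul_conj_dft]
  rw [sum_comm, mul_sum, sum_filter]
  refine sum_congr rfl fun a _ => ?_
  rw [← mul_sum, sum_range_eC_mul_div hq]
  split_ifs
  · field_simp
  · simp

lemma sq_dft_zero (w : ℤ → ℂ) (H : ℕ) :
    ((‖dft w H 0‖ ^ 2 : ℝ) : ℂ) = ∑ a ∈ Icc (-(2 * H : ℤ)) (2 * H : ℤ), corrW w H a := by
  push_cast
  simp [← Complex.mul_conj', dft_mul_conj_dft, eC_zero]

lemma mean_sq_dft_Ico_eq (w : ℤ → ℂ) (H : ℕ) {q : ℕ} (hq : q ≠ 0) :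
    (((1 / q : ℝ) * ∑ j ∈ Ico 1 q, ‖dft w H (j / q)‖ ^ 2 : ℝ) : ℂ) =
      (∑ a ∈ (Icc (-(2 * H : ℤ)) (2 * H : ℤ)).filter (fun a => (q : ℤ) ∣ a), corrW w H a) -
        (1 / (q : ℂ)) * ∑ a ∈ Icc (-(2 * H : ℤ)) (2 * H : ℤ), corrW w H a := by
  rw [← mean_sq_dft_eq_sum_corrW_dvd w H hq, ← sq_dft_zero, range_eq_Ico,
    sum_eq_sum_Ico_succ_bot (Nat.pos_of_ne_zero hq), Nat.cast_zero, zero_div]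
  simp only [Complex.ofReal_mul, Complex.ofReal_add, Complex.ofReal_div, Complex.ofReal_one,
    Complex.ofReal_natCast]
  ring

lemma filter_dvd_Icc_eq_zero {H q : ℕ} (hq : 2 * H < q) :
    (Icc (-(2 * H : ℤ)) (2 * H : ℤ)).filter (fun a => (q : ℤ) ∣ a) = {0} := by
  ext a
  simp only [mem_filter, mem_Icc, mem_singleton]
  constructor
  · rintro ⟨ha, hdvd⟩
    exact Int.eq_zero_of_abs_lt_dvd hdvd (by rw [abs_lt]; omega)
  · rintro rfl
    simp

theorem stmt9 (K C : ℝ) :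
    ∃ C' : ℝ, 0 < C' ∧ ∀ w : ℤ → ℂ,
      (∀ n : ℤ, ‖w n‖ ≤ K) →
      (∀ H : ℕ, 0 < H → ∀ ℓ : ℕ, 1 ≤ ℓ → ℓ ≤ 2 * H →
        ‖((∑ a ∈ (Finset.Icc (-(2 * H : ℤ)) (2 * H : ℤ)).filter (fun a => (ℓ : ℤ) ∣ a),
              corrW w H a) -
            (1 / (ℓ : ℂ)) * ∑ a ∈ Finset.Icc (-(2 * H : ℤ)) (2 * H : ℤ), corrW w H a)‖ ≤
          C * H) →
      ∀ H : ℕ, 0 < H → ∀ q : ℕ, 1 ≤ q →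
        (1 / (q : ℝ)) *
            ∑ j ∈ Finset.Ico 1 q, ‖dft w H ((j : ℝ) / (q : ℝ))‖ ^ 2 ≤
          C' * H := by
  refine ⟨|C| + 3 * K ^ 2 + 1, by positivity, fun w hw hdisc H hH q hq => ?_⟩
  have hq0 : q ≠ 0 := by omega
  have hH1 : (1 : ℝ) ≤ H := by exact_mod_cast hH
  rcases le_or_gt q (2 * H) with hqH | hqH
  · calc _ = ‖(((1 / q : ℝ) * ∑ j ∈ Ico 1 q, ‖dft w H (j / q)‖ ^ 2 : ℝ) : ℂ)‖ := by
          rw [Complex.norm_real, Real.norm_of_nonneg (by positivity)]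
      _ ≤ C * H := by rw [mean_sq_dft_Ico_eq w H hq0]; exact hdisc H hH q hq hqH
      _ ≤ _ := by gcongr; linarith [le_abs_self C, sq_nonneg K]
  · calc _ ≤ (1 / q : ℝ) * ∑ j ∈ range q, ‖dft w H (j / q)‖ ^ 2 := by
          gcongr
          intro j hj; simp only [mem_Ico, mem_range] at hj ⊢; omega
      _ = ‖corrW w H 0‖ := by
          rw [← sum_singleton (corrW w H) 0, ← filter_dvd_Icc_eq_zero hqH,
            ← mean_sq_dft_eq_sum_corrW_dvd w H hq0, Complex.norm_real,
            Real.norm_of_nonneg (by positivity)]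
      _ ≤ (2 * H + 1) * K ^ 2 := norm_corrW_le hw 0
      _ ≤ _ := by nlinarith [abs_nonneg C, sq_nonneg K]
end
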